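/- Let H be a finite-index subgroup of a group G, let S be a finite generating set of G, and let C be a set of right coset representatives for H in G containing the identity as the representative of the coset H. Then the set T = { c·s·c'⁻¹ : c, c' ∈ C, s ∈ S } ∩ H generates H. Moreover, for any word s_1 ... s_n in S and the sequence of coset representatives c_0 = 1, c_k = the representative of H·c_{k-1}·s_k, the element s_1 ⋯ s_n · c_n⁻¹ equals the product of the n elements (c_{k-1} s_k c_k⁻¹)_{k=1..n}, each of which lies in H. -/
import Mathlib


/-- Reidemeister–Schreier style rewriting for a finite-index subgroup `H ≤ G`:
with `r : G → G` picking right coset representatives (`r 1 = 1`,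
`g * (r g)⁻¹ ∈ H`, and `r` constant on right cosets of `H`), the set
`T = {c s c'⁻¹ : c, c' reps, s ∈ S} ∩ H` generates `H`; moreover for a word
`s₁ ⋯ s_n` in `S` and the representatives `c₀ = 1`, `c_{k+1} = r (c_k s_k)`,
each `c_k s_k c_{k+1}⁻¹` lies in `H` and
`s₁ ⋯ s_n (c_n)⁻¹ = ∏ (c_{k} s_{k} c_{k+1}⁻¹)`. -/
theorem reidemeister_schreier_rewriting
    {G : Type*} [Group G] (H : Subgroup G) [H.FiniteIndex]
    (S : Set G) (hSfin : S.Finite) (hSgen : Subgroup.closure S = ⊤)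
    (r : G → G) (hr1 : r 1 = 1)
    (hrH : ∀ g : G, g * (r g)⁻¹ ∈ H)
    (hrcoset : ∀ g g' : G, g * g'⁻¹ ∈ H → r g = r g')
    (n : ℕ) (s : ℕ → G) (hs : ∀ k < n, s k ∈ S)
    (c : ℕ → G) (hc0 : c 0 = 1) (hck : ∀ k, c (k + 1) = r (c k * s k)) :
    Subgroup.closure
        {t : G | t ∈ H ∧ ∃ c₁ c₂ x, c₁ ∈ Set.range r ∧ c₂ ∈ Set.range r ∧
          x ∈ S ∧ t = c₁ * x * c₂⁻¹} = H ∧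
    (∀ k < n, c k * s k * (c (k + 1))⁻¹ ∈ H) ∧
    ((List.range n).map s).prod * (c n)⁻¹ =
      ((List.range n).map (fun k => c k * s k * (c (k + 1))⁻¹)).prod := by
  have hrfix : ∀ cc ∈ Set.range r, r cc = cc := by
    rintro _ ⟨g, rfl⟩
    exact (hrcoset g (r g) (hrH g)).symm
  refine ⟨le_antisymm ((Subgroup.closure_le H).mpr fun t ht => ht.1) ?_, ?_, ?_⟩
  · -- H ≤ closure T
    intro h hh
    have key : ∀ g : G, ∀ cc ∈ Set.range r,
        cc * g * (r (cc * g))⁻¹ ∈ Subgroup.closure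
          {t : G | t ∈ H ∧ ∃ c₁ c₂ x, c₁ ∈ Set.range r ∧ c₂ ∈ Set.range r ∧
            x ∈ S ∧ t = c₁ * x * c₂⁻¹} := by
      intro g
      have hg : g ∈ Subgroup.closure S := hSgen ▸ Subgroup.mem_top g
      induction hg using Subgroup.closure_induction with
      | mem x hx =>
        intro cc hcc
        exact Subgroup.subset_closure ⟨hrH _, cc, r (cc * x), x, hcc, ⟨_, rfl⟩, hx, rfl⟩
      | one =>
        intro cc hcc
        simpa [hrfix cc hcc] using Subgroup.one_mem _
      | mul a b _ _ ha hb =>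
        intro cc hcc
        have h1 : r (cc * a * b) = r (r (cc * a) * b) := by
          apply hrcoset
          have : cc * a * b * (r (cc * a) * b)⁻¹ = cc * a * (r (cc * a))⁻¹ := by group
          rw [this]; exact hrH _
        have h2 := hb (r (cc * a)) ⟨_, rfl⟩
        have h3 := ha cc hcc
        have : cc * (a * b) * (r (cc * (a * b)))⁻¹
            = (cc * a * (r (cc * a))⁻¹) * (r (cc * a) * b * (r (r (cc * a) * b))⁻¹) := by
          rw [← mul_assoc, h1]; group
        rw [this]
        exact Subgroup.mul_mem _ h3 h2
      | inv a _ ha =>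
        intro cc hcc
        set d := r (cc * a⁻¹) with hd
        have h1 : r (d * a) = cc := by
          rw [← hrfix cc hcc]
          apply hrcoset
          have : d * a * cc⁻¹ = (cc * a⁻¹ * d⁻¹)⁻¹ := by group
          rw [this]
          exact Subgroup.inv_mem _ (hrH (cc * a⁻¹))
        have h2 := ha d ⟨_, rfl⟩
        rw [h1] at h2
        have : cc * a⁻¹ * (r (cc * a⁻¹))⁻¹ = (d * a * cc⁻¹)⁻¹ := by rw [← hd]; group
        rw [this]
        exact Subgroup.inv_mem _ h2
    have hrh : r h = 1 := by
      rw [hrcoset h 1 (by simpa using hh), hr1]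
    have := key h 1 ⟨1, hr1⟩
    simpa [hrh] using this
  · intro k _
    rw [hck k]
    exact hrH _
  · clear hs
    induction n with
    | zero => simp [hc0]
    | succ m ih =>
      rw [List.range_succ, List.map_append, List.prod_append,
        List.map_append, List.prod_append]
      simp only [List.map_cons, List.map_nil, List.prod_cons, List.prod_nil]
      rw [← ih]
      group
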